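/- Convergence in mean (Proposition 1). Let E be a real Hilbert space, C ⊆ E a closed linear subspace, 0 < μ ≤ L, α > 0, and set ζ = max{|1 − αμ|, |1 − αL|}; assume ζ < 1. Let (f_k)_{k≥0} be functions f_k : E → ℝ, each differentiable, μ-strongly convex, with L-Lipschitz gradient, and for each k let x_k* ∈ C be the minimizer of f_k over C, with ‖x_{k+1}* − x_k*‖ ≤ σ for all k and some σ ≥ 0. Let (Ω, 𝔽, ℙ) be a probability space, and let (x_k)_{k≥0} and (e_k)_{k≥0} be sequences of E-valued random vectors with ‖x_k − x_k*‖ and ‖e_k‖ integrable, satisfying x_{k+1}(ω) = proj_C(x_k(ω) − α∇f_k(x_k(ω))) + e_k(ω) for ℙ-almost every ω, and 𝔼[‖e_k‖] ≤ c for all k and some c ≥ 0. Then for all k ≥ 0, 𝔼[‖x_k − x_k*‖] ≤ ζ^k·𝔼[‖x_0 − x_0*‖] + (σ + c)·(1 − ζ^{k+1})/(1 − ζ). -/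

import Mathlib

open MeasureTheory

open RealInnerProductSpace

section aux
variable {E : Type*} [NormedAddCommGroup E] [InnerProductSpace ℝ E] [CompleteSpace E]

lemma line_hasDerivAt {f : E → ℝ} {g : E → E} (hdiff : ∀ x, HasGradientAt f (g x) x)
    (x v : E) (t : ℝ) :
    HasDerivAt (fun t : ℝ => f (x + t • v)) ⟪g (x + t • v), v⟫ t := by
  have hc : HasDerivAt (fun t : ℝ => x + t • v) v t := by
    simpa using ((hasDerivAt_id t).smul_const v).const_add x
  have hf := (hasGradientAt_iff_hasFDerivAt.1 (hdiff (x + t • v)))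
  exact hf.comp_hasDerivAt t hc

lemma grad_ineq {f : E → ℝ} {g : E → E} (hconv : ConvexOn ℝ Set.univ f)
    (hψ : ∀ (x v : E) (t : ℝ),
      HasDerivAt (fun t : ℝ => f (x + t • v)) ⟪g (x + t • v), v⟫ t)
    (x y : E) : f x + ⟪g x, y - x⟫ ≤ f y := by
  set v := y - x with hv
  have hconvψ : ConvexOn ℝ Set.univ (fun t : ℝ => f (x + t • v)) := by
    have h := hconv.comp_affineMap (AffineMap.lineMap x y : ℝ →ᵃ[ℝ] E)
    have heq : (f ∘ (AffineMap.lineMap x y : ℝ →ᵃ[ℝ] E)) = fun t : ℝ => f (x + t • v) := by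
      funext t
      simp only [Function.comp_apply, AffineMap.lineMap_apply_module, hv]
      congr 1
      module
    rw [heq] at h
    simpa using h
  have h0 := hψ x v 0
  have hslope := hconvψ.le_slope_of_hasDerivAt (Set.mem_univ (0:ℝ)) (Set.mem_univ (1:ℝ))
      one_pos (by simpa using h0)
  have : ⟪g x, v⟫ ≤ f (x + (1:ℝ) • v) - f (x + (0:ℝ) • v) := by
    simpa [slope_def_field, slope] using hslope
  simp only [one_smul, zero_smul, add_zero] at this
  have hxy : x + v = y := by rw [hv]; abel
  rw [hxy] at this
  linarith

set_option linter.unusedSectionVars false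
set_option maxHeartbeats 1000000

lemma descent_lemma {f : E → ℝ} {g : E → E} {L : ℝ} (hL : 0 ≤ L)
    (hψ : ∀ (x v : E) (t : ℝ),
      HasDerivAt (fun t : ℝ => f (x + t • v)) ⟪g (x + t • v), v⟫ t)
    (hlip : ∀ x y, ‖g x - g y‖ ≤ L * ‖x - y‖) (x y : E) :
    f y ≤ f x + ⟪g x, y - x⟫ + L / 2 * ‖y - x‖ ^ 2 := by
  set v := y - x with hv
  set h : ℝ → ℝ := fun t => f (x + t • v) - t * ⟪g x, v⟫ - t ^ 2 * (L / 2) * ‖v‖ ^ 2 with hh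
  have hder : ∀ t : ℝ, HasDerivAt h
      (⟪g (x + t • v), v⟫ - ⟪g x, v⟫ - 2 * t * (L / 2) * ‖v‖ ^ 2) t := by
    intro t
    have h1 := hψ x v t
    have h2 : HasDerivAt (fun t : ℝ => t * ⟪g x, v⟫) ⟪g x, v⟫ t := by
      simpa using (hasDerivAt_id t).mul_const ⟪g x, v⟫
    have h3 : HasDerivAt (fun t : ℝ => t ^ 2 * (L / 2) * ‖v‖ ^ 2)
        (2 * t * (L / 2) * ‖v‖ ^ 2) t := by
      have := ((hasDerivAt_pow 2 t).mul_const (L / 2)).mul_const (‖v‖ ^ 2)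
      simpa [mul_comm, mul_assoc, mul_left_comm] using this
    exact (h1.sub h2).sub h3
  have hderiv_nonpos : ∀ t ∈ Set.Ioo (0:ℝ) 1, deriv h t ≤ 0 := by
    intro t ht
    rw [(hder t).deriv]
    have hb : ⟪g (x + t • v) - g x, v⟫ ≤ L * t * ‖v‖ ^ 2 := by
      calc ⟪g (x + t • v) - g x, v⟫ ≤ ‖g (x + t • v) - g x‖ * ‖v‖ := real_inner_le_norm _ _
        _ ≤ (L * ‖x + t • v - x‖) * ‖v‖ :=
          mul_le_mul_of_nonneg_right (hlip _ _) (norm_nonneg _)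
        _ = L * t * ‖v‖ ^ 2 := by
          simp [norm_smul, abs_of_pos ht.1]
          ring
    rw [inner_sub_left] at hb
    nlinarith [ht.1.le]
  have hmono : AntitoneOn h (Set.Icc (0:ℝ) 1) := by
    apply antitoneOn_of_deriv_nonpos (convex_Icc 0 1)
    · exact fun t _ => ((hder t).continuousAt).continuousWithinAt
    · intro t _
      exact ((hder t).differentiableAt).differentiableWithinAt
    · intro t ht
      rw [interior_Icc] at ht
      exact hderiv_nonpos t ht
  have h10 : h 1 ≤ h 0 := hmono (Set.left_mem_Icc.2 zero_le_one)
    (Set.right_mem_Icc.2 zero_le_one) zero_le_one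
  have hxy : x + (1:ℝ) • v = y := by rw [hv]; simp
  simp only [hh, hxy, one_pow, one_mul, zero_smul, add_zero, zero_pow, zero_mul,
    sub_zero, ne_eq, OfNat.ofNat_ne_zero, not_false_eq_true] at h10
  linarith

lemma coco_aux {φ : E → ℝ} {G : E → E} {M : ℝ} (hM : 0 < M)
    (hgrad : ∀ x y, φ x + ⟪G x, y - x⟫ ≤ φ y)
    (hdesc : ∀ x y, φ y ≤ φ x + ⟪G x, y - x⟫ + M / 2 * ‖y - x‖ ^ 2)
    (x y : E) :
    φ x + ⟪G x, y - x⟫ + 1 / (2 * M) * ‖G y - G x‖ ^ 2 ≤ φ y := by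
  set d := G y - G x with hd
  set z := y - (M⁻¹) • d with hz
  have h1 := hdesc y z
  have h2 := hgrad x z
  have hzy : z - y = -(M⁻¹ • d) := by rw [hz]; abel
  have hzx : z - x = (y - x) - M⁻¹ • d := by rw [hz]; abel
  rw [hzy] at h1
  rw [hzx] at h2
  rw [inner_neg_right, real_inner_smul_right] at h1
  rw [inner_sub_right, real_inner_smul_right] at h2
  have hnorm : ‖-(M⁻¹ • d)‖ ^ 2 = M⁻¹ ^ 2 * ‖d‖ ^ 2 := by
    rw [norm_neg, norm_smul, norm_inv, Real.norm_eq_abs, abs_of_pos hM]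
    ring
  rw [hnorm] at h1
  have hGyd : ⟪G y, d⟫ - ⟪G x, d⟫ = ‖d‖ ^ 2 := by
    rw [← inner_sub_left, ← hd, real_inner_self_eq_norm_sq]
  have hM' : M ≠ 0 := hM.ne'
  have h3 : M⁻¹ * ⟪G y, d⟫ - M⁻¹ * ⟪G x, d⟫ = M⁻¹ * ‖d‖ ^ 2 := by
    rw [← mul_sub, hGyd]
  have h4 : M / 2 * (M⁻¹ ^ 2 * ‖d‖ ^ 2) = M⁻¹ * ‖d‖ ^ 2 / 2 := by
    field_simp
  have h5 : 1 / (2 * M) * ‖G y - G x‖ ^ 2 = M⁻¹ * ‖d‖ ^ 2 / 2 := by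
    rw [← hd]
    ring
  rw [h4] at h1
  rw [h5]
  linarith

lemma coco {φ : E → ℝ} {G : E → E} {M : ℝ} (hM : 0 < M)
    (hgrad : ∀ x y, φ x + ⟪G x, y - x⟫ ≤ φ y)
    (hdesc : ∀ x y, φ y ≤ φ x + ⟪G x, y - x⟫ + M / 2 * ‖y - x‖ ^ 2)
    (x y : E) : (1 / M) * ‖G x - G y‖ ^ 2 ≤ ⟪G x - G y, x - y⟫ := by
  have h1 := coco_aux hM hgrad hdesc x y
  have h2 := coco_aux hM hgrad hdesc y x
  have e1 : ⟪G y, x - y⟫ = -⟪G y, y - x⟫ := by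
    rw [← inner_neg_right]; congr 1; abel
  have e2 : ‖G x - G y‖ = ‖G y - G x‖ := norm_sub_rev _ _
  have e4 : ⟪G x, y - x⟫ = -⟪G x, x - y⟫ := by
    rw [← inner_neg_right]; congr 1; abel
  have hq : 1 / M = 2 * (1 / (2 * M)) := by ring
  rw [inner_sub_left, e1, hq]
  rw [norm_sub_rev (G x) (G y)] at h2 ⊢
  rw [e4] at h1
  linarith

lemma contraction {f : E → ℝ} {g : E → E} {μ L α ζ : ℝ}
    (hμ : 0 < μ) (hμL : μ ≤ L) (hα : 0 < α)
    (hζ : ζ = max |1 - α * μ| |1 - α * L|)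
    (hdiff : ∀ x, HasGradientAt f (g x) x)
    (hsc : ConvexOn ℝ Set.univ (fun x => f x - μ / 2 * ‖x‖ ^ 2))
    (hlip : ∀ x y, ‖g x - g y‖ ≤ L * ‖x - y‖) (x y : E) :
    ‖x - y - α • (g x - g y)‖ ≤ ζ * ‖x - y‖ := by
  have hL0 : (0:ℝ) ≤ L := le_trans hμ.le hμL
  set φ : E → ℝ := fun z => f z - μ / 2 * ‖z‖ ^ 2 with hφ
  set G : E → E := fun z => g z - μ • z with hG
  -- 1D derivatives for f
  have hψf : ∀ (a v : E) (t : ℝ),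
      HasDerivAt (fun t : ℝ => f (a + t • v)) ⟪g (a + t • v), v⟫ t :=
    fun a v t => line_hasDerivAt hdiff a v t
  -- 1D derivatives for φ
  have hψφ : ∀ (a v : E) (t : ℝ),
      HasDerivAt (fun t : ℝ => φ (a + t • v)) ⟪G (a + t • v), v⟫ t := by
    intro a v t
    have hline : HasDerivAt (fun t : ℝ => a + t • v) v t := by
      simpa using ((hasDerivAt_id t).smul_const v).const_add a
    have hn : HasDerivAt (fun t : ℝ => ‖a + t • v‖ ^ 2) (2 * ⟪a + t • v, v⟫) t :=
      hline.norm_sq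
    have h2 := (hψf a v t).sub (hn.const_mul (μ / 2))
    have heq : ⟪g (a + t • v), v⟫ - μ / 2 * (2 * ⟪a + t • v, v⟫)
        = ⟪G (a + t • v), v⟫ := by
      rw [hG]
      simp only [inner_sub_left, real_inner_smul_left]
      ring
    rw [heq] at h2
    exact h2
  have hgradφ : ∀ a b : E, φ a + ⟪G a, b - a⟫ ≤ φ b :=
    fun a b => grad_ineq hsc hψφ a b
  set u := x - y with hu
  set w := g x - g y with hw
  set r := ‖x - y‖ with hr
  set s := ‖g x - g y‖ with hs'
  set p := ⟪g x - g y, x - y⟫ with hp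
  have hGxy : G x - G y = w - μ • u := by
    rw [hG, hw, hu]; simp only [smul_sub]; abel
  have hinner1 : ⟪G x - G y, x - y⟫ = p - μ * r ^ 2 := by
    rw [hGxy, inner_sub_left, real_inner_smul_left, ← hu, real_inner_self_eq_norm_sq, hp, hr, hu]
  have hp1 : μ * r ^ 2 ≤ p := by
    have h1 := hgradφ x y
    have h2 := hgradφ y x
    have e1 : ⟪G y, x - y⟫ = -⟪G y, y - x⟫ := by
      rw [← inner_neg_right]; congr 1; abel
    have e2 : ⟪G x, y - x⟫ = -⟪G x, x - y⟫ := by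
      rw [← inner_neg_right]; congr 1; abel
    rw [e2] at h1; rw [e1] at h2
    have : 0 ≤ ⟪G x - G y, x - y⟫ := by
      rw [inner_sub_left]; linarith
    rw [hinner1] at this; linarith
  have hps : p ≤ s * r := by
    rw [hp, hs', hr]; exact real_inner_le_norm _ _
  have hsr : s ≤ L * r := hlip x y
  have hr0 : (0:ℝ) ≤ r := norm_nonneg _
  have hs0 : (0:ℝ) ≤ s := norm_nonneg _
  -- interpolation bound
  have hC : s ^ 2 ≤ (L + μ) * p - μ * L * r ^ 2 := by
    rcases eq_or_lt_of_le hμL with heq | hlt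
    · subst heq
      nlinarith [hp1, hps, hsr, hr0, hs0]
    · set M := L - μ with hM
      have hM0 : 0 < M := by rw [hM]; linarith
      have hdescφ : ∀ a b : E, φ b ≤ φ a + ⟪G a, b - a⟫ + M / 2 * ‖b - a‖ ^ 2 := by
        intro a b
        have hd := descent_lemma hL0 hψf hlip a b
        have hn : ‖b - a‖ ^ 2 = ‖b‖ ^ 2 - 2 * ⟪b, a⟫ + ‖a‖ ^ 2 := by
          rw [← real_inner_self_eq_norm_sq, ← real_inner_self_eq_norm_sq,
            ← real_inner_self_eq_norm_sq, inner_sub_left, inner_sub_right, inner_sub_right,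
            real_inner_comm a b]
          ring
        have hi : ⟪G a, b - a⟫ = ⟪g a, b - a⟫ - μ * (⟪b, a⟫ - ‖a‖ ^ 2) := by
          rw [hG]
          simp only [inner_sub_left, real_inner_smul_left, inner_sub_right,
            real_inner_self_eq_norm_sq]
          rw [real_inner_comm a b]
          ring
        rw [hφ]
        simp only []
        rw [hi, hM]
        nlinarith [hd, hn]
      have hcoco := coco hM0 hgradφ hdescφ x y
      rw [hinner1, hGxy] at hcoco
      have hnn : ‖w - μ • u‖ ^ 2 = s ^ 2 - 2 * μ * p + μ ^ 2 * r ^ 2 := by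
        rw [norm_sub_sq_real, real_inner_smul_right, norm_smul, Real.norm_eq_abs,
          abs_of_pos hμ, mul_pow]
        rw [hw, hu, ← hp, ← hs', ← hr]
        ring
      rw [hnn] at hcoco
      rw [div_mul_eq_mul_div, one_mul, div_le_iff₀ hM0] at hcoco
      rw [hM] at hcoco
      nlinarith [hcoco]
  -- expand squared norm
  have hv : ‖x - y - α • (g x - g y)‖ ^ 2 = r ^ 2 - 2 * α * p + α ^ 2 * s ^ 2 := by
    rw [norm_sub_sq_real, real_inner_smul_right, norm_smul, Real.norm_eq_abs,
      abs_of_pos hα, mul_pow, real_inner_comm (g x - g y) (x - y)]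
    rw [← hp, ← hs', ← hr]
    ring
  have hζ0 : 0 ≤ ζ := by rw [hζ]; exact le_trans (abs_nonneg _) (le_max_left _ _)
  have hsq : ‖x - y - α • (g x - g y)‖ ^ 2 ≤ (ζ * r) ^ 2 := by
    rw [hv]
    have hCα : α ^ 2 * s ^ 2 ≤ α ^ 2 * ((L + μ) * p - μ * L * r ^ 2) :=
      mul_le_mul_of_nonneg_left hC (sq_nonneg α)
    rcases le_or_gt (α * (L + μ)) 2 with hcase | hcase
    · have hzm : (1 - α * μ) ^ 2 ≤ ζ ^ 2 := by
        rw [hζ, ← sq_abs (1 - α * μ)]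
        have h := le_max_left |1 - α * μ| |1 - α * L|
        exact pow_le_pow_left₀ (abs_nonneg _) h 2
      have key : 0 ≤ α * (p - μ * r ^ 2) * (2 - α * (L + μ)) :=
        mul_nonneg (mul_nonneg hα.le (by linarith)) (by linarith)
      nlinarith [key, hCα, hzm, sq_nonneg r, mul_le_mul_of_nonneg_right hzm (sq_nonneg r)]
    · have hzm : (1 - α * L) ^ 2 ≤ ζ ^ 2 := by
        rw [hζ, ← sq_abs (1 - α * L)]
        have h := le_max_right |1 - α * μ| |1 - α * L|
        exact pow_le_pow_left₀ (abs_nonneg _) h 2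
      have hp2 : p ≤ L * r ^ 2 := by nlinarith [hps, hsr, hr0]
      have key : 0 ≤ α * (L * r ^ 2 - p) * (α * (L + μ) - 2) :=
        mul_nonneg (mul_nonneg hα.le (by linarith)) (by linarith)
      nlinarith [key, hCα, hzm, sq_nonneg r, mul_le_mul_of_nonneg_right hzm (sq_nonneg r)]
  calc ‖x - y - α • (g x - g y)‖ = √(‖x - y - α • (g x - g y)‖ ^ 2) := by
        rw [Real.sqrt_sq (norm_nonneg _)]
    _ ≤ √((ζ * r) ^ 2) := Real.sqrt_le_sqrt hsq
    _ = ζ * r := Real.sqrt_sq (mul_nonneg hζ0 hr0)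

lemma grad_perp {f : E → ℝ} {g : E → E} (K : Submodule ℝ E)
    (hdiff : ∀ x, HasGradientAt f (g x) x)
    {z : E} (hzK : z ∈ K) (hmin : ∀ y ∈ K, f z ≤ f y)
    {y : E} (hy : y ∈ K) : ⟪g z, y⟫ = 0 := by
  have hψ := line_hasDerivAt hdiff z y
  have hloc : IsLocalMin (fun t : ℝ => f (z + t • y)) 0 := by
    apply IsMinOn.isLocalMin _ (Filter.univ_mem)
    intro t _
    simp only [zero_smul, add_zero]
    exact hmin _ (K.add_mem hzK (K.smul_mem _ hy))
  have := hloc.hasDerivAt_eq_zero (hψ 0)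
  simpa using this

lemma proj_fixed {f : E → ℝ} {g : E → E} (K : Submodule ℝ E) [K.HasOrthogonalProjection]
    (hdiff : ∀ x, HasGradientAt f (g x) x)
    {z : E} (hzK : z ∈ K) (hmin : ∀ y ∈ K, f z ≤ f y) (α : ℝ) :
    (K.orthogonalProjectionOnto (z - α • g z) : E) = z := by
  have hperp : g z ∈ Kᗮ := by
    rw [Submodule.mem_orthogonal]
    intro u hu
    rw [real_inner_comm]
    exact grad_perp K hdiff hzK hmin hu
  have h1 : (K.orthogonalProjectionOnto z : E) = z := Submodule.starProjection_eq_self_iff.2 hzK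
  have h2 : K.orthogonalProjectionOnto (g z) = 0 :=
    Submodule.orthogonalProjectionOnto_apply_of_mem_orthogonal hperp
  rw [map_sub, _root_.map_smul]
  simp [h2, h1]

end aux

/-- Proposition 1, convergence in mean: for the inexact online
projected gradient recursion `x_{k+1} = proj_C(x_k - α ∇f_k(x_k)) + e_k`
(holding almost surely), with `μ`-strongly convex, `L`-smooth costs `f_k`
(gradients `g_k`), minimizers `x_k*` over the closed subspace `C` drifting by
at most `σ`, random errors with `𝔼‖e_k‖ ≤ c`, and
`ζ = max {|1-αμ|, |1-αL|} < 1`, one has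
`𝔼‖x_k - x_k*‖ ≤ ζ^k 𝔼‖x_0 - x_0*‖ + (σ + c)(1 - ζ^{k+1})/(1 - ζ)`. -/
theorem ftqc_dgd_convergence_in_mean
    {E : Type*} [NormedAddCommGroup E] [InnerProductSpace ℝ E] [CompleteSpace E]
    (K : Submodule ℝ E) (hK : IsClosed (K : Set E)) [K.HasOrthogonalProjection]
    (μ L : ℝ) (hμ : 0 < μ) (hμL : μ ≤ L)
    (α : ℝ) (hα : 0 < α)
    (ζ : ℝ) (hζ : ζ = max |1 - α * μ| |1 - α * L|) (hζ1 : ζ < 1)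
    (f : ℕ → E → ℝ) (g : ℕ → E → E)
    (hdiff : ∀ (k : ℕ) (x : E), HasGradientAt (f k) (g k x) x)
    (hsc : ∀ k : ℕ, ConvexOn ℝ Set.univ (fun x => f k x - μ / 2 * ‖x‖ ^ 2))
    (hlip : ∀ (k : ℕ) (x y : E), ‖g k x - g k y‖ ≤ L * ‖x - y‖)
    (xstar : ℕ → E) (hxstarK : ∀ k, xstar k ∈ K)
    (hxstarMin : ∀ k, ∀ y ∈ K, f k (xstar k) ≤ f k y)
    (σ : ℝ) (hσ : 0 ≤ σ) (hdrift : ∀ k, ‖xstar (k + 1) - xstar k‖ ≤ σ)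
    {Ω : Type*} [MeasurableSpace Ω] (P : Measure Ω) [IsProbabilityMeasure P]
    (x : ℕ → Ω → E) (e : ℕ → Ω → E)
    (hxmeas : ∀ k, AEStronglyMeasurable (x k) P)
    (hemeas : ∀ k, AEStronglyMeasurable (e k) P)
    (hxint : ∀ k, Integrable (fun ω => ‖x k ω - xstar k‖) P)
    (heint : ∀ k, Integrable (fun ω => ‖e k ω‖) P)
    (hrec : ∀ k, ∀ᵐ ω ∂P,
      x (k + 1) ω = (K.orthogonalProjectionOnto (x k ω - α • g k (x k ω)) : E) + e k ω)
    (c : ℝ) (hc : 0 ≤ c)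
    (he : ∀ k, ∫ ω, ‖e k ω‖ ∂P ≤ c) :
    ∀ k, ∫ ω, ‖x k ω - xstar k‖ ∂P ≤
      ζ ^ k * (∫ ω, ‖x 0 ω - xstar 0‖ ∂P) + (σ + c) * (1 - ζ ^ (k + 1)) / (1 - ζ) := by
  have hζ0 : 0 ≤ ζ := by rw [hζ]; exact le_trans (abs_nonneg _) (le_max_left _ _)
  have h1ζ : (0:ℝ) < 1 - ζ := by linarith
  have h1ζ' : (1:ℝ) - ζ ≠ 0 := h1ζ.ne'
  -- one-step inequality
  have hstep : ∀ k, ∫ ω, ‖x (k+1) ω - xstar (k+1)‖ ∂P ≤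
      ζ * (∫ ω, ‖x k ω - xstar k‖ ∂P) + (σ + c) := by
    intro k
    have hfix : (K.orthogonalProjectionOnto (xstar k - α • g k (xstar k)) : E) = xstar k :=
      proj_fixed K (hdiff k) (hxstarK k) (hxstarMin k) α
    have hae : ∀ᵐ ω ∂P, ‖x (k+1) ω - xstar (k+1)‖ ≤
        ζ * ‖x k ω - xstar k‖ + (‖e k ω‖ + σ) := by
      filter_upwards [hrec k] with ω hω
      have hsplit : x (k+1) ω - xstar (k+1) =
          ((K.orthogonalProjectionOnto (x k ω - α • g k (x k ω)) : E) - xstar k) + e k ω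
            + (xstar k - xstar (k+1)) := by
        rw [hω]; abel
      rw [hsplit]
      have hb1 : ‖(K.orthogonalProjectionOnto (x k ω - α • g k (x k ω)) : E) - xstar k‖ ≤
          ζ * ‖x k ω - xstar k‖ := by
        conv_lhs => rw [← hfix]
        have hcoe : (K.orthogonalProjectionOnto (x k ω - α • g k (x k ω)) : E) -
            (K.orthogonalProjectionOnto (xstar k - α • g k (xstar k)) : E) =
            (K.orthogonalProjectionOnto ((x k ω - α • g k (x k ω)) -
              (xstar k - α • g k (xstar k))) : E) := by
          rw [map_sub]; simp
        rw [hcoe]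
        have hproj : ‖(K.orthogonalProjectionOnto ((x k ω - α • g k (x k ω)) -
            (xstar k - α • g k (xstar k))) : E)‖ ≤
            ‖(x k ω - α • g k (x k ω)) - (xstar k - α • g k (xstar k))‖ := by
          calc ‖(K.orthogonalProjectionOnto ((x k ω - α • g k (x k ω)) -
              (xstar k - α • g k (xstar k))) : E)‖
              ≤ ‖K.orthogonalProjectionOnto‖ * ‖(x k ω - α • g k (x k ω)) -
                (xstar k - α • g k (xstar k))‖ := (K.orthogonalProjectionOnto).le_opNorm _
            _ ≤ 1 * _ := mul_le_mul_of_nonneg_right (Submodule.orthogonalProjectionOnto_norm_le K) (norm_nonneg _)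
            _ = _ := one_mul _
        refine le_trans hproj ?_
        have hrw : (x k ω - α • g k (x k ω)) - (xstar k - α • g k (xstar k)) =
            x k ω - xstar k - α • (g k (x k ω) - g k (xstar k)) := by
          rw [smul_sub]; abel
        rw [hrw]
        exact contraction hμ hμL hα hζ (hdiff k) (hsc k) (hlip k) _ _
      have hb3 : ‖xstar k - xstar (k+1)‖ ≤ σ := by
        rw [norm_sub_rev]; exact hdrift k
      calc ‖_ + e k ω + (xstar k - xstar (k+1))‖ ≤
          ‖(K.orthogonalProjectionOnto (x k ω - α • g k (x k ω)) : E) - xstar k‖ + ‖e k ω‖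
            + ‖xstar k - xstar (k+1)‖ := norm_add₃_le
        _ ≤ ζ * ‖x k ω - xstar k‖ + (‖e k ω‖ + σ) := by linarith
    have hconst : Integrable (fun _ : Ω => σ) P := integrable_const σ
    have hg : Integrable (fun ω => ‖e k ω‖ + σ) P := (heint k).add hconst
    have hf2 : Integrable (fun ω => ζ * ‖x k ω - xstar k‖) P := (hxint k).const_mul ζ
    have hInt : Integrable (fun ω => ζ * ‖x k ω - xstar k‖ + (‖e k ω‖ + σ)) P := hf2.add hg
    have hle := integral_mono_ae (hxint (k+1)) hInt hae
    have hsum : ∫ ω, (ζ * ‖x k ω - xstar k‖ + (‖e k ω‖ + σ)) ∂P =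
        ζ * (∫ ω, ‖x k ω - xstar k‖ ∂P) + ((∫ ω, ‖e k ω‖ ∂P) + σ) := by
      rw [integral_add hf2 hg, integral_add (heint k) hconst, integral_const_mul,
        integral_const]
      simp [measure_univ]
    rw [hsum] at hle
    have := he k
    linarith
  intro k
  induction k with
  | zero =>
    have : (σ + c) * (1 - ζ ^ (0 + 1)) / (1 - ζ) = σ + c := by
      rw [pow_one, mul_div_assoc, div_self h1ζ', mul_one]
    rw [pow_zero, one_mul, this]
    linarith [add_nonneg hσ hc]
  | succ k ih =>
    have h2 := hstep k
    have h3 : ζ * (∫ ω, ‖x k ω - xstar k‖ ∂P) ≤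
        ζ * (ζ ^ k * (∫ ω, ‖x 0 ω - xstar 0‖ ∂P) + (σ + c) * (1 - ζ ^ (k + 1)) / (1 - ζ)) :=
      mul_le_mul_of_nonneg_left ih hζ0
    have halg : ζ * (ζ ^ k * (∫ ω, ‖x 0 ω - xstar 0‖ ∂P)
          + (σ + c) * (1 - ζ ^ (k + 1)) / (1 - ζ)) + (σ + c) =
        ζ ^ (k+1) * (∫ ω, ‖x 0 ω - xstar 0‖ ∂P)
          + (σ + c) * (1 - ζ ^ (k + 1 + 1)) / (1 - ζ) := by
      field_simp
      ring
    linarith
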